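/- Let K be a number field of degree d with set of complex embeddings Σ, and let Λ_K be the image of the unit group O_K^× under the logarithmic embedding ℓ. Set T₀ = exp(ρ_∞(Λ_K)), where ρ_∞ is the covering radius with respect to the sup norm. Then for every nonzero a ∈ K there exists a unit u ∈ O_K^× such that |σ(ua)| ≤ T₀ · |N_{K/ℚ}(a)|^(1/d) for every embedding σ ∈ Σ. -/

import Mathlib

open NumberField

/-- Effective version of Lemma 5.5: if `ρ` is a covering radius (in sup norm) for the
image of the unit lattice under the logarithmic embedding
`x ↦ (mult w * log (w x))_w` inside the trace-zero hyperplane, then for every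
nonzero `a ∈ K` there is a unit `u` with `|σ(u a)| ≤ exp ρ * |N_{K/ℚ}(a)|^(1/d)`
for all complex embeddings `σ`. -/
theorem units_cover_archimedean_bound (K : Type*) [Field K] [NumberField K]
    (ρ : ℝ)
    (hρ : ∀ b : InfinitePlace K → ℝ, (∑ w, b w) = 0 →
      ∃ u : (𝓞 K)ˣ, ∀ w : InfinitePlace K,
        |b w + (w.mult : ℝ) * Real.log (w (algebraMap (𝓞 K) K u))| ≤ ρ)
    (a : K) (ha : a ≠ 0) :
    ∃ u : (𝓞 K)ˣ, ∀ σ : K →+* ℂ,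
      ‖σ (algebraMap (𝓞 K) K u * a)‖ ≤
        Real.exp ρ * |((Algebra.norm ℚ a : ℚ) : ℝ)| ^ ((1 : ℝ) / (Module.finrank ℚ K)) := by
  set n : ℕ := Module.finrank ℚ K with hn
  have hd : 0 < n := Module.finrank_pos
  set N : ℝ := |((Algebra.norm ℚ a : ℚ) : ℝ)| with hNdef
  have hN : (0:ℝ) < N := by
    rw [hNdef, abs_pos]
    exact_mod_cast Algebra.norm_ne_zero_iff.mpr ha
  set L : ℝ := Real.log N with hL
  -- ρ ≥ 0
  have hρ0 : 0 ≤ ρ := by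
    obtain ⟨u, hu⟩ := hρ (fun _ => 0) (by simp)
    obtain ⟨w⟩ := (inferInstance : Nonempty (InfinitePlace K))
    exact le_trans (abs_nonneg _) (hu w)
  -- product formula in log form
  have hsumlog : ∑ w : InfinitePlace K, (w.mult : ℝ) * Real.log (w a) = L := by
    rw [hL, hNdef]
    have := NumberField.InfinitePlace.prod_eq_abs_norm a
    rw [show |((Algebra.norm ℚ a : ℚ) : ℝ)| = ((|Algebra.norm ℚ a| : ℚ) : ℝ) by push_cast; ring,
      ← this]
    push_cast
    rw [Real.log_prod]
    · exact Finset.sum_congr rfl fun w _ => by rw [Real.log_pow]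
    · intro w _
      exact pow_ne_zero _ (ne_of_gt (InfinitePlace.pos_iff.mpr ha))
  set b : InfinitePlace K → ℝ := fun w => (w.mult : ℝ) * Real.log (w a) - (w.mult : ℝ) * (L / n)
  have hsum : (∑ w, b w) = 0 := by
    simp only [b, Finset.sum_sub_distrib, hsumlog, ← Finset.sum_mul]
    have : (∑ w : InfinitePlace K, (w.mult : ℝ)) = (n : ℝ) := by
      exact_mod_cast congrArg (Nat.cast : ℕ → ℝ) (NumberField.InfinitePlace.sum_mult_eq (K := K))
    rw [this]
    field_simp
    ring
  obtain ⟨u, hu⟩ := hρ b hsum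
  refine ⟨u, fun σ => ?_⟩
  set w : InfinitePlace K := InfinitePlace.mk σ
  have huK : (algebraMap (𝓞 K) K (u : 𝓞 K)) ≠ 0 := by
    simpa using Units.ne_zero u
  have hua : (algebraMap (𝓞 K) K u * a) ≠ 0 := mul_ne_zero huK ha
  have hwua : 0 < w (algebraMap (𝓞 K) K u * a) := InfinitePlace.pos_iff.mpr hua
  have hlogmul : Real.log (w (algebraMap (𝓞 K) K u * a)) =
      Real.log (w a) + Real.log (w (algebraMap (𝓞 K) K u)) := by
    rw [map_mul, Real.log_mul (ne_of_gt (InfinitePlace.pos_iff.mpr huK))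
      (ne_of_gt (InfinitePlace.pos_iff.mpr ha))]
    ring
  have key : (w.mult : ℝ) * (Real.log (w (algebraMap (𝓞 K) K u * a)) - L / n) ≤ ρ := by
    have := (abs_le.mp (hu w)).2
    simp only [b] at this
    rw [hlogmul]
    nlinarith [this]
  have hm1 : (1 : ℝ) ≤ (w.mult : ℝ) := InfinitePlace.one_le_mult
  have hlog_le : Real.log (w (algebraMap (𝓞 K) K u * a)) ≤ ρ + L / n := by
    rcases le_or_gt (Real.log (w (algebraMap (𝓞 K) K u * a)) - L / n) 0 with h | h
    · linarith
    · nlinarith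
  have : w (algebraMap (𝓞 K) K u * a) ≤ Real.exp (ρ + L / n) := by
    calc w (algebraMap (𝓞 K) K u * a)
        = Real.exp (Real.log (w (algebraMap (𝓞 K) K u * a))) := (Real.exp_log hwua).symm
      _ ≤ Real.exp (ρ + L / n) := Real.exp_le_exp.mpr hlog_le
  have hrpow : N ^ ((1 : ℝ) / (n : ℝ)) = Real.exp (L / n) := by
    rw [Real.rpow_def_of_pos hN, hL]
    ring_nf
  calc ‖σ (algebraMap (𝓞 K) K u * a)‖
      = w (algebraMap (𝓞 K) K u * a) := (InfinitePlace.apply σ _).symm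
    _ ≤ Real.exp (ρ + L / n) := this
    _ = Real.exp ρ * N ^ ((1 : ℝ) / (n : ℝ)) := by rw [Real.exp_add, hrpow]
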